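/- arXiv:2201.08899 — 3 statements merged into one kernel-verified Lean document; each statement's English description precedes it below -/
import Mathlib

section
/- Let (Ω, X_n, ℙ_x) be a Markov chain on a nonempty finite set V, let B ⊆ V with B ≠ V satisfy ℙ_z(τ_{V∖B} < ∞) = 1 for every z ∈ B, and let y_0, y_1, …, y_n be distinct points of B. Define F_B(y_0, …, y_n) = G_B(y_0,y_0) · G_{B∖{y_0}}(y_1,y_1) · G_{B∖{y_0,y_1}}(y_2,y_2) ⋯ G_{B∖{y_0,…,y_{n-1}}}(y_n,y_n). Then for every permutation σ of {0,1,…,n}, F_B(y_0, y_1, …, y_n) = F_B(y_{σ(0)}, y_{σ(1)}, …, y_{σ(n)}). -/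
/-!
Let `Q_S` be the transition matrix of the chain killed on leaving `S`, so that
`ℙ_x(X_n = y, τ_{V∖S} > n) = Q_S^n(x, y)`. The exit hypothesis forces `Q_S^n → 0` for every
`S ⊆ B`, hence `1 - Q_S` is invertible and `G_S = ∑ₙ Q_S^n = (1 - Q_S)⁻¹`. By Cramer's rule
`G_S(x, x) = det(1 - Q_{S∖{x}}) / det(1 - Q_S)`, so the product `F_B(y_0, …, y_n)` telescopes to
`det(1 - Q_{B∖{y_0,…,y_n}}) / det(1 - Q_B)`, which depends only on the set `{y_0, …, y_n}`.
-/

open MeasureTheory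

namespace LERW

variable {V : Type*} [DecidableEq V]

/-- The suffix of `l` strictly after the last occurrence of `a` in `l`
(`l` itself if `a` does not occur in `l`). -/
def dropToLastOcc (a : V) (l : List V) : List V :=
  (l.reverse.takeWhile (fun z => z ≠ a)).reverse

lemma dropToLastOcc_length_le (a : V) (l : List V) :
    (dropToLastOcc a l).length ≤ l.length := by
  unfold dropToLastOcc
  calc ((l.reverse.takeWhile (fun z => z ≠ a)).reverse).length
      = (l.reverse.takeWhile (fun z => z ≠ a)).length := by simp
    _ ≤ l.reverse.length := (List.takeWhile_sublist _).length_le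
    _ = l.length := by simp

/-- Partial loop erasure `𝔏_S` of a finite path, associated with a set `S` of vertices. -/
def PLE (S : Finset V) : List V → List V
  | [] => []
  | a :: rest =>
    if a ∈ S then
      if a = (a :: rest).getLast (List.cons_ne_nil a rest) then [a]
      else a :: PLE S (dropToLastOcc a rest)
    else
      if rest = [] then [a]
      else a :: PLE S rest
termination_by l => l.length
decreasing_by
  · simpa using Nat.lt_succ_of_le (dropToLastOcc_length_le a rest)
  · simp

variable [Fintype V]

/-- The (full) loop erasure `𝔏 = 𝔏_V`. -/
def LE : List V → List V := PLE Finset.univ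

/-- Iterated partial loop erasure `𝔏_{W m} ∘ ⋯ ∘ 𝔏_{W 2} ∘ 𝔏_{W 1}`. -/
def iterPLE (W : ℕ → Finset V) : ℕ → List V → List V
  | 0, l => l
  | n + 1, l => PLE (W (n + 1)) (iterPLE W n l)

/-- The remaining suffix `w|_{[n_j , η]}` of the loop-erasing walk of `𝔏` the first time
its current value equals `b` (`[]` if this never happens). -/
def LEsuffixAt (b : V) : List V → List V
  | [] => []
  | a :: rest =>
    if a = b then a :: rest
    else if a = (a :: rest).getLast (List.cons_ne_nil a rest) then []
    else LEsuffixAt b (dropToLastOcc a rest)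
termination_by l => l.length
decreasing_by
  simpa using Nat.lt_succ_of_le (dropToLastOcc_length_le a rest)

/-- Entry time `τ_A` into `A ⊆ V`, valued in `ℕ∞`. -/
noncomputable def entryTime (A : Finset V) (ω : ℕ → V) : ℕ∞ :=
  sInf {m : ℕ∞ | ∃ n : ℕ, m = (n : ℕ∞) ∧ ω n ∈ A}

/-- Entry time `τ_A` as a natural number (junk value `0` when `A` is never visited). -/
noncomputable def entryTimeNat (A : Finset V) (ω : ℕ → V) : ℕ :=
  sInf {n : ℕ | ω n ∈ A}

/-- The random finite path `X|_{[0, τ_A]} = (X_0, X_1, …, X_{τ_A})`. -/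
noncomputable def stoppedPath (A : Finset V) (ω : ℕ → V) : List V :=
  (List.range (entryTimeNat A ω + 1)).map ω

/-- Iterated hitting times `τ̊_W^{(n)}` of `W`, valued in `ℕ∞` (with the convention
`τ̊_W^{(0)} = 0`). -/
noncomputable def iterHit (W : Finset V) (ω : ℕ → V) : ℕ → ℕ∞
  | 0 => 0
  | n + 1 => sInf {m : ℕ∞ | ∃ k : ℕ, m = (k : ℕ∞) ∧ iterHit W ω n < (k : ℕ∞) ∧ ω k ∈ W}

/-- The time `τ̊_W^{(n)} ∧ τ_A`, as a natural number. -/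
noncomputable def traceTime (W A : Finset V) (ω : ℕ → V) (n : ℕ) : ℕ :=
  (iterHit W ω n ⊓ entryTime A ω).toNat

variable [MeasurableSpace V]

/-- The trace process `X̃_n = X_{τ̊_W^{(n)} ∧ τ_A}` (so `X̃_0 = X_0`). -/
noncomputable def traceProc (W A : Finset V) (ω : ℕ → V) (n : ℕ) : V :=
  ω (traceTime W A ω n)

/-- The Green function `G_B(x, y) = 𝔼_x(#{0 ≤ n < τ_{V∖B} : X_n = y})`. -/
noncomputable def green (μ : V → Measure (ℕ → V)) (B : Finset V) (x y : V) : ℝ :=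
  ∑' n : ℕ, (μ x {ω | ω n = y ∧ ∀ k ≤ n, ω k ∈ B}).toReal

end LERW

open Finset Filter Topology

namespace Matrix

variable {ι : Type*} [Fintype ι] [DecidableEq ι]

theorem pow_apply_eq_sum_paths {R : Type*} [CommSemiring R] (M : Matrix ι ι R) (k : ℕ)
    (x y : ι) :
    (M ^ k) x y = ∑ c : Fin (k + 1) → ι,
      if c 0 = x ∧ c (Fin.last k) = y then ∏ i : Fin k, M (c i.castSucc) (c i.succ) else 0 := by
  induction k generalizing x with
  | zero =>
    rw [← (Equiv.funUnique (Fin 1) ι).symm.sum_comp]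
    simp [one_apply, Fin.last, ite_and]
  | succ k ih =>
    rw [pow_succ', mul_apply, ← (Fin.consEquiv fun _ => ι).sum_comp, Fintype.sum_prod_type]
    simp only [ih, Finset.mul_sum]
    rw [Finset.sum_comm]
    simp only [Fin.consEquiv_apply, Fin.cons_zero, ← Fin.succ_last, Fin.cons_succ,
      Fin.prod_univ_succ, Fin.castSucc_zero, ← Fin.succ_castSucc, ite_and]
    simp [mul_ite, Finset.sum_ite_irrel]

theorem det_eq_mul_det_toSquareBlockProp_ne {R : Type*} [CommRing R] (M : Matrix ι ι R)
    {x : ι} (hx : ∀ j ≠ x, M x j = 0) :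
    M.det = M x x * (M.toSquareBlockProp (· ≠ x)).det := by
  rw [M.twoBlockTriangular_det' (· = x) fun i hi j hj => hi ▸ hx j hj]
  congr 1
  exact M.det_toSquareBlock_id x

variable {K : Type*} [Field K] [TopologicalSpace K] [IsTopologicalRing K] [T2Space K]

theorem det_one_sub_ne_zero_of_tendsto_pow {Q : Matrix ι ι K}
    (hQ : Tendsto (fun n => Q ^ n) atTop (𝓝 0)) : (1 - Q).det ≠ 0 := by
  intro h
  obtain ⟨v, hv0, hv⟩ := exists_mulVec_eq_zero_iff.2 h
  have hQv : Q *ᵥ v = v := by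
    rw [sub_mulVec, one_mulVec, sub_eq_zero] at hv
    exact hv.symm
  have hfix : ∀ n, (Q ^ n) *ᵥ v = v := by
    intro n
    induction n with
    | zero => simp
    | succ n ih => rw [pow_succ, ← mulVec_mulVec, hQv, ih]
  have hlim : Tendsto (fun n => (Q ^ n) *ᵥ v) atTop (𝓝 (0 *ᵥ v)) :=
    ((continuous_id.matrix_mulVec continuous_const).tendsto 0).comp hQ
  simp only [hfix, zero_mulVec] at hlim
  exact hv0 (tendsto_nhds_unique tendsto_const_nhds hlim)

theorem tendsto_sum_range_pow {Q : Matrix ι ι K} (hQ : Tendsto (fun n => Q ^ n) atTop (𝓝 0)) :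
    Tendsto (fun N => ∑ k ∈ range N, Q ^ k) atTop (𝓝 (1 - Q)⁻¹) := by
  have hdet : IsUnit (1 - Q).det := (det_one_sub_ne_zero_of_tendsto_pow hQ).isUnit
  have hsum : ∀ N, ∑ k ∈ range N, Q ^ k = (1 - Q)⁻¹ * (1 - Q ^ N) := fun N => by
    rw [← mul_neg_geom_sum, ← mul_assoc, nonsing_inv_mul _ hdet, one_mul]
  simp only [hsum]
  have := ((tendsto_const_nhds (x := (1 : Matrix ι ι K))).sub hQ).const_mul (1 - Q)⁻¹
  rwa [sub_zero, mul_one] at this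

end Matrix

theorem Finset.prod_div_erase_telescope {ι G : Type*} [DecidableEq ι] [CommGroupWithZero G]
    {d : Finset ι → G} {B : Finset ι} (hd : ∀ S ⊆ B, d S ≠ 0) :
    ∀ {n : ℕ} (y : Fin n → ι),
      ∏ i, d ((B \ (Iio i).image y).erase (y i)) / d (B \ (Iio i).image y) =
        d (B \ univ.image y) / d B
  | 0, y => by simp [div_self (hd B subset_rfl)]
  | n + 1, y => by
    have hcast : ∀ i : Fin n, (Iio i.castSucc).image y = (Iio i).image (y ∘ Fin.castSucc) := by
      intro i
      rw [← Fin.map_castSuccEmb_Iio, map_eq_image, image_image]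
      rfl
    have hlast : (Iio (Fin.last n)).image y = univ.image (y ∘ Fin.castSucc) := by
      ext z
      simp
    have himage : univ.image y = insert (y (Fin.last n)) (univ.image (y ∘ Fin.castSucc)) := by
      ext z
      simp [Fin.exists_fin_succ', or_comm, eq_comm]
    have ih := prod_div_erase_telescope hd (y ∘ Fin.castSucc)
    simp only [Function.comp_apply] at ih
    rw [Fin.prod_univ_castSucc]
    simp only [hcast, hlast, ih]
    rw [div_mul_div_cancel₀' (hd _ sdiff_subset), ← sdiff_insert, himage]

namespace LERW

section KilledMatrix

variable {ι R : Type*} [DecidableEq ι]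

def killedMatrix [Zero R] (P : ι → ι → R) (S : Finset ι) : Matrix ι ι R :=
  Matrix.of fun x y => if x ∈ S ∧ y ∈ S then P x y else 0

theorem killedMatrix_nonneg [Zero R] [Preorder R] {P : ι → ι → R} (hP0 : ∀ a b, 0 ≤ P a b)
    (S : Finset ι) (x y : ι) : 0 ≤ killedMatrix P S x y := by
  simp only [killedMatrix, Matrix.of_apply]
  split_ifs <;> simp [hP0]

theorem prod_killedMatrix_path [CommMonoidWithZero R] (P : ι → ι → R) (S : Finset ι) {k : ℕ}
    (c : Fin (k + 1) → ι) (hc : c 0 ∈ S) :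
    ∏ i : Fin k, killedMatrix P S (c i.castSucc) (c i.succ) =
      if ∀ i, c i ∈ S then ∏ i : Fin k, P (c i.castSucc) (c i.succ) else 0 := by
  simp only [killedMatrix, Matrix.of_apply]
  rw [Finset.prod_ite_zero]
  congr 1
  refine propext ⟨fun h i => ?_, fun h i _ => ⟨h _, h _⟩⟩
  cases i using Fin.cases with
  | zero => exact hc
  | succ i => exact (h i (mem_univ _)).2

variable [Fintype ι]

theorem killedMatrix_pow_succ_apply_of_notMem [Semiring R] (P : ι → ι → R) {S : Finset ι}
    {x : ι} (hx : x ∉ S) (n : ℕ) (y : ι) : (killedMatrix P S ^ (n + 1)) x y = 0 := by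
  rw [pow_succ', Matrix.mul_apply]
  exact Finset.sum_eq_zero fun z _ => by simp [killedMatrix, hx]

theorem adjugate_one_sub_killedMatrix_apply_self [CommRing R] (P : ι → ι → R) (S : Finset ι)
    (x : ι) : (1 - killedMatrix P S).adjugate x x = (1 - killedMatrix P (S.erase x)).det := by
  rw [Matrix.adjugate_apply, Matrix.det_eq_mul_det_toSquareBlockProp_ne _ (x := x),
    Matrix.det_eq_mul_det_toSquareBlockProp_ne _ (x := x)]
  · congr 1
    · simp [killedMatrix]
    · congr 1
      ext ⟨i, hi⟩ ⟨j, hj⟩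
      simp [Matrix.toSquareBlockProp, Matrix.toBlock, killedMatrix, hi, hj, Matrix.one_apply]
  · intro j hj
    simp [killedMatrix, hj.symm]
  · intro j hj
    simp [hj]

end KilledMatrix

variable {V : Type*}

def pathPrefix (n : ℕ) (ω : ℕ → V) : Fin (n + 1) → V := fun i => ω i

variable [MeasurableSpace V]

def HasCylinderLaw [DecidableEq V] (P : V → V → ℝ) (μ : V → Measure (ℕ → V)) : Prop :=
  ∀ (a : V) (n : ℕ) (y : ℕ → V), μ a {ω | ∀ i ≤ n, ω i = y i} =
    ENNReal.ofReal ((if a = y 0 then (1 : ℝ) else 0) * ∏ i ∈ Finset.Icc 1 n, P (y (i - 1)) (y i))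

theorem measurable_pathPrefix (n : ℕ) : Measurable (pathPrefix (V := V) n) :=
  measurable_pi_lambda _ fun i => measurable_pi_apply (i : ℕ)

variable {P : V → V → ℝ} {μ : V → Measure (ℕ → V)}

theorem measure_pathPrefix_preimage_singleton [DecidableEq V] (hlaw : HasCylinderLaw P μ)
    (x : V) {n : ℕ} (c : Fin (n + 1) → V) :
    μ x (pathPrefix n ⁻¹' {c}) =
      ENNReal.ofReal ((if x = c 0 then 1 else 0) * ∏ i : Fin n, P (c i.castSucc) (c i.succ)) := by
  have hset : pathPrefix n ⁻¹' {c} = {ω | ∀ i ≤ n, ω i = c (Fin.ofNat (n + 1) i)} := by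
    ext ω
    simp only [Set.mem_preimage, Set.mem_singleton_iff, Set.mem_ofPred_eq, funext_iff,
      pathPrefix]
    refine ⟨fun h i hi => ?_, fun h i => ?_⟩
    · rw [← h]
      simp [Nat.mod_eq_of_lt (Nat.lt_succ_of_le hi)]
    · rw [h i (Nat.le_of_lt_succ i.isLt)]
      congr
      ext
      simp
  rw [hset, hlaw]
  congr 2
  rw [← Finset.Ico_add_one_right_eq_Icc, prod_Ico_eq_prod_range, Nat.add_sub_cancel,
    ← Fin.prod_univ_eq_prod_range]
  refine prod_congr rfl fun i _ => ?_
  congr 2 <;> ext <;> simp [add_comm]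

theorem tendsto_measure_stay_nhds_zero [Fintype V] [MeasurableSingletonClass V]
    {ν : Measure (ℕ → V)} [IsProbabilityMeasure ν] {S B : Finset V} (hSB : S ⊆ B)
    (hexit : ν {ω | ∃ n, ω n ∉ B} = 1) :
    Tendsto (fun n => ν {ω | ∀ k ≤ n, ω k ∈ S}) atTop (𝓝 0) := by
  have hlim := tendsto_measure_iInter_atTop (μ := ν) (s := fun n => {ω | ∀ k ≤ n, ω k ∈ S})
    (fun n => by measurability) (fun m n hmn ω hω k hk => hω k (hk.trans hmn))
    ⟨0, measure_ne_top ν _⟩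
  have hstay : ⋂ n, {ω : ℕ → V | ∀ k ≤ n, ω k ∈ S} ⊆ {ω | ∃ n, ω n ∉ B}ᶜ := by
    intro ω hω
    simp only [Set.mem_iInter, Set.mem_ofPred_eq] at hω
    simpa using fun n => hSB (hω n n le_rfl)
  rwa [measure_mono_null hstay ((prob_compl_eq_zero_iff (by measurability)).2 hexit)] at hlim

variable [Fintype V] [DecidableEq V] [MeasurableSingletonClass V]

theorem measure_stay_eq_killedMatrix_pow (hP0 : ∀ a b, 0 ≤ P a b) (hlaw : HasCylinderLaw P μ)
    {S : Finset V} {x : V} (hx : x ∈ S) (n : ℕ) (y : V) :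
    μ x {ω | ω n = y ∧ ∀ k ≤ n, ω k ∈ S} = ENNReal.ofReal ((killedMatrix P S ^ n) x y) := by
  set T : Finset (Fin (n + 1) → V) := univ.filter fun c => c (Fin.last n) = y ∧ ∀ i, c i ∈ S
  have hset : {ω | ω n = y ∧ ∀ k ≤ n, ω k ∈ S} = pathPrefix n ⁻¹' ↑T := by
    ext ω
    simp [T, pathPrefix, Fin.forall_iff]
  have hnonneg : ∀ c : Fin (n + 1) → V,
      0 ≤ (if x = c 0 then (1 : ℝ) else 0) * ∏ i : Fin n, P (c i.castSucc) (c i.succ) :=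
    fun c => mul_nonneg (by split_ifs <;> norm_num) (prod_nonneg fun i _ => hP0 _ _)
  rw [hset, ← sum_measure_preimage_singleton T
      fun c _ => measurable_pathPrefix n (measurableSet_singleton c)]
  simp only [measure_pathPrefix_preimage_singleton hlaw]
  rw [← ENNReal.ofReal_sum_of_nonneg fun c _ => hnonneg c, Matrix.pow_apply_eq_sum_paths,
    sum_filter]
  congr 1
  refine sum_congr rfl fun c _ => ?_
  by_cases hc0 : c 0 = x
  · subst hc0
    rw [prod_killedMatrix_path P S c hx]
    split_ifs <;> simp_all
  · simp [hc0, Ne.symm hc0]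

theorem tendsto_killedMatrix_pow (hP0 : ∀ a b, 0 ≤ P a b) (hlaw : HasCylinderLaw P μ)
    (hprob : ∀ a, IsProbabilityMeasure (μ a)) {B : Finset V}
    (hexit : ∀ z ∈ B, μ z {ω | ∃ n, ω n ∉ B} = 1) {S : Finset V} (hSB : S ⊆ B) :
    Tendsto (fun n => killedMatrix P S ^ n) atTop (𝓝 0) := by
  refine tendsto_pi_nhds.2 fun x => tendsto_pi_nhds.2 fun y => ?_
  by_cases hx : x ∈ S
  · have hstay := (ENNReal.tendsto_toReal ENNReal.zero_ne_top).comp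
      (tendsto_measure_stay_nhds_zero (ν := μ x) hSB (hexit x (hSB hx)))
    rw [ENNReal.toReal_zero] at hstay
    refine squeeze_zero (fun n => Matrix.pow_apply_nonneg (killedMatrix_nonneg hP0 S) n x y)
      (fun n => ?_) hstay
    rw [← ENNReal.toReal_ofReal (Matrix.pow_apply_nonneg (killedMatrix_nonneg hP0 S) n x y),
      ← measure_stay_eq_killedMatrix_pow hP0 hlaw hx]
    exact ENNReal.toReal_mono (measure_ne_top _ _) (measure_mono fun ω h => h.2)
  · exact tendsto_const_nhds.congr' (eventually_atTop.2
      ⟨1, fun n hn => by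
        obtain ⟨m, rfl⟩ := Nat.exists_eq_add_of_le' hn
        exact (killedMatrix_pow_succ_apply_of_notMem P hx m y).symm⟩)

theorem green_eq_det_div_det (hP0 : ∀ a b, 0 ≤ P a b) (hlaw : HasCylinderLaw P μ)
    (hprob : ∀ a, IsProbabilityMeasure (μ a)) {B : Finset V}
    (hexit : ∀ z ∈ B, μ z {ω | ∃ n, ω n ∉ B} = 1) {S : Finset V} (hSB : S ⊆ B) {x : V}
    (hx : x ∈ S) :
    green μ S x x = (1 - killedMatrix P (S.erase x)).det / (1 - killedMatrix P S).det := by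
  have hnonneg n := Matrix.pow_apply_nonneg (killedMatrix_nonneg hP0 S) n x x
  have hsum : HasSum (fun n => (killedMatrix P S ^ n) x x) ((1 - killedMatrix P S)⁻¹ x x) := by
    rw [hasSum_iff_tendsto_nat_of_nonneg hnonneg]
    have := Matrix.tendsto_sum_range_pow (tendsto_killedMatrix_pow hP0 hlaw hprob hexit hSB)
    simpa [Matrix.sum_apply] using tendsto_pi_nhds.1 (tendsto_pi_nhds.1 this x) x
  calc green μ S x x = ∑' n, (killedMatrix P S ^ n) x x := tsum_congr fun n => by
        rw [measure_stay_eq_killedMatrix_pow hP0 hlaw hx,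
          ENNReal.toReal_ofReal (hnonneg n)]
    _ = (1 - killedMatrix P S)⁻¹ x x := hsum.tsum_eq
    _ = (1 - killedMatrix P (S.erase x)).det / (1 - killedMatrix P S).det := by
        rw [Matrix.inv_def, Matrix.smul_apply, Ring.inverse_eq_inv', smul_eq_mul,
          adjugate_one_sub_killedMatrix_apply_self, inv_mul_eq_div]

theorem prod_green_eq_det_div_det (hP0 : ∀ a b, 0 ≤ P a b) (hlaw : HasCylinderLaw P μ)
    (hprob : ∀ a, IsProbabilityMeasure (μ a)) {B : Finset V}
    (hexit : ∀ z ∈ B, μ z {ω | ∃ n, ω n ∉ B} = 1) {n : ℕ} (y : Fin n → V)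
    (hyinj : Function.Injective y) (hyB : ∀ i, y i ∈ B) :
    ∏ i, green μ (B \ (Iio i).image y) (y i) (y i) =
      (1 - killedMatrix P (B \ univ.image y)).det / (1 - killedMatrix P B).det := by
  rw [← Finset.prod_div_erase_telescope (d := fun S => (1 - killedMatrix P S).det)
    fun S hSB => Matrix.det_one_sub_ne_zero_of_tendsto_pow
      (tendsto_killedMatrix_pow hP0 hlaw hprob hexit hSB)]
  refine prod_congr rfl fun i _ => green_eq_det_div_det hP0 hlaw hprob hexit sdiff_subset ?_
  simp [hyB i, hyinj.eq_iff]

theorem green_F_permutation_invariant_general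
    {V : Type*} [Fintype V] [DecidableEq V]
    [MeasurableSpace V] [MeasurableSingletonClass V]
    (P : V → V → ℝ) (μ : V → Measure (ℕ → V))
    (hP0 : ∀ a b : V, 0 ≤ P a b)
    (hprob : ∀ a : V, IsProbabilityMeasure (μ a))
    (hlaw : ∀ (a : V) (n : ℕ) (y : ℕ → V),
      μ a {ω | ∀ i ≤ n, ω i = y i} =
        ENNReal.ofReal ((if a = y 0 then (1 : ℝ) else 0) *
          ∏ i ∈ Finset.Icc 1 n, P (y (i - 1)) (y i)))
    (B : Finset V)
    (hexit : ∀ z ∈ B, μ z {ω | ∃ n : ℕ, ω n ∉ B} = 1)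
    (n : ℕ) (y : Fin (n + 1) → V) (hyinj : Function.Injective y)
    (hyB : ∀ i, y i ∈ B) (σ : Equiv.Perm (Fin (n + 1))) :
    ∏ i : Fin (n + 1), green μ (B \ (Finset.Iio i).image y) (y i) (y i) =
      ∏ i : Fin (n + 1),
        green μ (B \ (Finset.Iio i).image (y ∘ σ)) ((y ∘ σ) i) ((y ∘ σ) i) := by
  rw [prod_green_eq_det_div_det hP0 hlaw hprob hexit y hyinj hyB,
    prod_green_eq_det_div_det hP0 hlaw hprob hexit (y ∘ σ) (hyinj.comp σ.injective)
      fun i => hyB (σ i),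
    image_comp, image_univ_equiv]

theorem green_F_permutation_invariant
    {V : Type*} [Fintype V] [DecidableEq V] [Nonempty V]
    [MeasurableSpace V] [MeasurableSingletonClass V]
    (P : V → V → ℝ) (μ : V → Measure (ℕ → V))
    (hP0 : ∀ a b : V, 0 ≤ P a b) (hP1 : ∀ a : V, ∑ b : V, P a b = 1)
    (hprob : ∀ a : V, IsProbabilityMeasure (μ a))
    (hlaw : ∀ (a : V) (n : ℕ) (y : ℕ → V),
      μ a {ω | ∀ i ≤ n, ω i = y i} =
        ENNReal.ofReal ((if a = y 0 then (1 : ℝ) else 0) *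
          ∏ i ∈ Finset.Icc 1 n, P (y (i - 1)) (y i)))
    (B : Finset V) (hB : B ≠ Finset.univ)
    (hexit : ∀ z ∈ B, μ z {ω | ∃ n : ℕ, ω n ∉ B} = 1)
    (n : ℕ) (y : Fin (n + 1) → V) (hyinj : Function.Injective y)
    (hyB : ∀ i, y i ∈ B) (σ : Equiv.Perm (Fin (n + 1))) :
    ∏ i : Fin (n + 1), green μ (B \ (Finset.Iio i).image y) (y i) (y i) =
      ∏ i : Fin (n + 1),
        green μ (B \ (Finset.Iio i).image (y ∘ σ)) ((y ∘ σ) i) ((y ∘ σ) i) :=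
  green_F_permutation_invariant_general P μ hP0 hprob hlaw B hexit n y hyinj hyB σ

end LERW
end

section
/- Let (Ω, X_n, ℙ_x) be a Markov chain on a nonempty finite set V, let A ⊆ V, let V_A = {z ∈ V : ℙ_z(τ_A < ∞) = 1}, and let Ṽ ⊆ V. For x ∈ V_A, define the trace process X̃ by X̃_0 = X_0 and X̃_n = X_{τ̊_Ṽ^{(n)} ∧ τ_A} for n ≥ 1. Then ℙ_x-almost surely X̃_n ∈ V_A for every n, and X̃ is a Markov chain on V_A with transition kernel P̃(u, z) = ℙ_u(X_{τ̊_Ṽ ∧ τ_A} = z); that is, for every n ≥ 0 and all y_0, y_1, …, y_n ∈ V_A, ℙ_x(X̃_0 = y_0, X̃_1 = y_1, …, X̃_n = y_n) = 1_{x = y_0} · ∏_{i=1}^{n} P̃(y_{i-1}, y_i). -/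
/-!
The time `T_n = τ̊_W^{(n)} ∧ τ_A` at which `X̃_n` is read off is a stopping time, finite
`ℙ_x`-almost surely because `T_n ≤ τ_A`, and on `{τ_A < ∞}` the value `X̃_{n+1}` is `X̃_1` of the
path shifted by `T_n`. The strong Markov property at `T_n` therefore gives
`ℙ_x(X̃_0 = y_0, …, X̃_{n+1} = y_{n+1}) = ℙ_x(X̃_0 = y_0, …, X̃_n = y_n) · P̃(y_n, y_{n+1})`.
Applied to `{X̃_n = z}` and the event `{τ_A < ∞}` it gives
`ℙ_x(X̃_n = z) = ℙ_x(X̃_n = z) · ℙ_z(τ_A < ∞)`, so `X̃_n ∈ V_A` almost surely.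
The Markov property at deterministic times is checked on cylinders, where it is the product
formula for the law of the chain, and extended to all events by a π-λ argument.
-/

open MeasureTheory

namespace LERW

variable {V : Type*} [DecidableEq V]

variable [Fintype V]

variable [MeasurableSpace V]

section PathSpace

variable {V : Type*}

/-- The shift `θ_m` on trajectories. -/
def pathShift (m : ℕ) (ω : ℕ → V) : ℕ → V := fun k => ω (m + k)

def DeterminedUpTo (m : ℕ) (S : Set (ℕ → V)) : Prop :=
  ∀ ω ω' : ℕ → V, (∀ k ≤ m, ω k = ω' k) → ω ∈ S → ω' ∈ S

def pathCylinder (v : ℕ → V) (m : ℕ) : Set (ℕ → V) := {ω | ∀ i ≤ m, ω i = v i}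

def restrictPath (m : ℕ) (ω : ℕ → V) : Fin (m + 1) → V := fun i => ω i

lemma DeterminedUpTo.mono {m m' : ℕ} {S : Set (ℕ → V)} (hS : DeterminedUpTo m S)
    (h : m ≤ m') : DeterminedUpTo m' S :=
  fun ω ω' hag => hS ω ω' fun k hk => hag k (hk.trans h)

lemma DeterminedUpTo.inter {m : ℕ} {S T : Set (ℕ → V)} (hS : DeterminedUpTo m S)
    (hT : DeterminedUpTo m T) : DeterminedUpTo m (S ∩ T) :=
  fun ω ω' hag h => ⟨hS ω ω' hag h.1, hT ω ω' hag h.2⟩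

lemma DeterminedUpTo.preimage_image {m : ℕ} {S : Set (ℕ → V)} (hS : DeterminedUpTo m S) :
    restrictPath m ⁻¹' (restrictPath m '' S) = S := by
  refine subset_antisymm ?_ (Set.subset_preimage_image _ _)
  rintro ω ⟨ω', hω', hr⟩
  exact hS ω' ω (fun k hk => congrFun hr ⟨k, Nat.lt_succ_of_le hk⟩) hω'

lemma restrictPath_preimage_singleton (m : ℕ) (v : ℕ → V) :
    restrictPath m ⁻¹' {restrictPath m v} = pathCylinder v m := by
  ext ω
  simp only [Set.mem_preimage, Set.mem_singleton_iff, funext_iff, restrictPath, pathCylinder,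
    Set.mem_ofPred_eq, Fin.forall_iff, Nat.lt_succ_iff]

lemma isPiSystem_determinedUpTo : IsPiSystem {S : Set (ℕ → V) | ∃ m, DeterminedUpTo m S} := by
  rintro S ⟨m, hS⟩ T ⟨m', hT⟩ -
  exact ⟨max m m', (hS.mono (le_max_left _ _)).inter (hT.mono (le_max_right _ _))⟩

def pathWeight (P : V → V → ℝ) (v : ℕ → V) (m : ℕ) : ℝ :=
  ∏ i ∈ Finset.range m, P (v i) (v (i + 1))

lemma prod_Icc_eq_pathWeight (P : V → V → ℝ) (v : ℕ → V) (m : ℕ) :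
    ∏ i ∈ Finset.Icc 1 m, P (v (i - 1)) (v i) = pathWeight P v m := by
  rw [← Finset.Ico_add_one_right_eq_Icc, Finset.prod_Ico_eq_prod_range, pathWeight,
    Nat.add_sub_cancel]
  simp only [add_comm 1, Nat.add_sub_cancel]

def pathGlue (v u : ℕ → V) (m : ℕ) : ℕ → V := fun i => if i ≤ m then v i else u (i - m)

lemma pathGlue_of_le {v u : ℕ → V} {m i : ℕ} (hi : i ≤ m) : pathGlue v u m i = v i :=
  if_pos hi

lemma pathGlue_add {v u : ℕ → V} {m : ℕ} (hu : u 0 = v m) (i : ℕ) :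
    pathGlue v u m (m + i) = u i := by
  rcases Nat.eq_zero_or_pos i with rfl | hi
  · rw [add_zero, pathGlue_of_le le_rfl, hu]
  · rw [pathGlue, if_neg (by omega), Nat.add_sub_cancel_left]

lemma pathWeight_pathGlue (P : V → V → ℝ) {v u : ℕ → V} {m : ℕ} (hu : u 0 = v m) (j : ℕ) :
    pathWeight P (pathGlue v u m) (m + j) = pathWeight P v m * pathWeight P u j := by
  rw [pathWeight, Finset.prod_range_add]
  congr 1 <;> refine Finset.prod_congr rfl fun i hi => ?_
  · rw [Finset.mem_range] at hi
    rw [pathGlue_of_le hi.le, pathGlue_of_le hi]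
  · rw [pathGlue_add hu, add_assoc, pathGlue_add hu]

lemma pathCylinder_inter_shift {v u : ℕ → V} {m : ℕ} (hu : u 0 = v m) (j : ℕ) :
    pathCylinder v m ∩ pathShift m ⁻¹' pathCylinder u j =
      pathCylinder (pathGlue v u m) (m + j) := by
  ext ω
  simp only [pathCylinder, pathShift, Set.mem_inter_iff, Set.mem_preimage, Set.mem_ofPred_eq]
  constructor
  · rintro ⟨hv, hu'⟩ i hi
    by_cases him : i ≤ m
    · rw [pathGlue_of_le him, hv i him]
    · obtain ⟨k, rfl⟩ := Nat.exists_eq_add_of_le (not_le.1 him).le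
      rw [pathGlue_add hu, hu' k (by omega)]
  · intro h
    refine ⟨fun i hi => (h i (by omega)).trans (pathGlue_of_le hi), fun i hi => ?_⟩
    rw [h (m + i) (by omega), pathGlue_add hu]

section Measurable

variable [MeasurableSpace V]

lemma measurable_pathShift (m : ℕ) : Measurable (pathShift m : (ℕ → V) → ℕ → V) :=
  measurable_pi_lambda _ fun k => measurable_pi_apply (m + k)

lemma measurable_restrictPath (m : ℕ) : Measurable (restrictPath m : (ℕ → V) → _) :=
  measurable_pi_lambda _ fun i => measurable_pi_apply (i : ℕ)

variable [MeasurableSingletonClass V] [Finite V]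

lemma DeterminedUpTo.measurableSet {m : ℕ} {S : Set (ℕ → V)} (hS : DeterminedUpTo m S) :
    MeasurableSet S :=
  hS.preimage_image ▸ measurable_restrictPath m (Set.toFinite _).measurableSet

lemma DeterminedUpTo.measure_eq_sum {m : ℕ} {S : Set (ℕ → V)} (hS : DeterminedUpTo m S)
    (ν : Measure (ℕ → V)) :
    ν S = ∑ y ∈ (Set.toFinite (restrictPath m '' S)).toFinset, ν (restrictPath m ⁻¹' {y}) := by
  rw [sum_measure_preimage_singleton _
    fun y _ => measurable_restrictPath m (measurableSet_singleton y),
    Set.Finite.coe_toFinset, hS.preimage_image]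

lemma generateFrom_determinedUpTo :
    MeasurableSpace.generateFrom {S : Set (ℕ → V) | ∃ m, DeterminedUpTo m S} =
      MeasurableSpace.pi := by
  refine le_antisymm (MeasurableSpace.generateFrom_le fun S ⟨_, hS⟩ => hS.measurableSet) ?_
  rw [MeasurableSpace.pi_eq_generateFrom_projections]
  refine MeasurableSpace.generateFrom_mono ?_
  rintro _ ⟨i, B, -, rfl⟩
  exact ⟨i, fun ω ω' hag h => by simpa [hag i le_rfl] using h⟩

end Measurable

end PathSpace

section MarkovProperty

variable {V : Type*} [DecidableEq V] [MeasurableSpace V]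

def HasMarkovLaw (P : V → V → ℝ) (μ : V → Measure (ℕ → V)) : Prop :=
  ∀ (a : V) (n : ℕ) (y : ℕ → V),
    μ a {ω | ∀ i ≤ n, ω i = y i} =
      ENNReal.ofReal ((if a = y 0 then (1 : ℝ) else 0) *
        ∏ i ∈ Finset.Icc 1 n, P (y (i - 1)) (y i))

variable {P : V → V → ℝ} {μ : V → Measure (ℕ → V)}

lemma HasMarkovLaw.measure_pathCylinder (hμ : HasMarkovLaw P μ) (a : V) (v : ℕ → V) (m : ℕ) :
    μ a (pathCylinder v m) =
      ENNReal.ofReal ((if a = v 0 then (1 : ℝ) else 0) * pathWeight P v m) := by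
  rw [pathCylinder, hμ, prod_Icc_eq_pathWeight]

lemma HasMarkovLaw.measure_pathCylinder_inter_shift (hμ : HasMarkovLaw P μ)
    (hP0 : ∀ a b, 0 ≤ P a b) (a : V) (v u : ℕ → V) (m j : ℕ) :
    μ a (pathCylinder v m ∩ pathShift m ⁻¹' pathCylinder u j) =
      μ a (pathCylinder v m) * μ (v m) (pathCylinder u j) := by
  by_cases hu : u 0 = v m
  · have hw : 0 ≤ (if a = v 0 then (1 : ℝ) else 0) * pathWeight P v m :=
      mul_nonneg (by split_ifs <;> norm_num) (Finset.prod_nonneg fun _ _ => hP0 _ _)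
    rw [pathCylinder_inter_shift hu, hμ.measure_pathCylinder, hμ.measure_pathCylinder,
      hμ.measure_pathCylinder, pathGlue_of_le (Nat.zero_le m), pathWeight_pathGlue P hu,
      if_pos hu.symm, one_mul, ← mul_assoc, ENNReal.ofReal_mul hw]
  · have hempty : pathCylinder v m ∩ pathShift m ⁻¹' pathCylinder u j = ∅ := by
      refine Set.eq_empty_of_forall_notMem fun ω ⟨hv, hu'⟩ => hu ?_
      rw [← hu' 0 (Nat.zero_le j), ← hv m le_rfl]
      rfl
    rw [hempty, measure_empty, hμ.measure_pathCylinder (v m), if_neg (Ne.symm hu), zero_mul,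
      ENNReal.ofReal_zero, mul_zero]

variable [MeasurableSingletonClass V] [Finite V]

lemma HasMarkovLaw.measure_inter_shift_of_determinedUpTo (hμ : HasMarkovLaw P μ)
    (hP0 : ∀ a b, 0 ≤ P a b) {a z : V} {m j : ℕ} {S F : Set (ℕ → V)}
    (hS : DeterminedUpTo m S) (hz : ∀ ω ∈ S, ω m = z) (hF : DeterminedUpTo j F) :
    μ a (S ∩ pathShift m ⁻¹' F) = μ a S * μ z F := by
  set B := (Set.toFinite (restrictPath m '' S)).toFinset
  set C := (Set.toFinite (restrictPath j '' F)).toFinset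
  have hpair : S ∩ pathShift m ⁻¹' F =
      (fun ω => (restrictPath m ω, restrictPath j (pathShift m ω))) ⁻¹' ↑(B ×ˢ C) := by
    conv_lhs => rw [← hS.preimage_image, ← hF.preimage_image]
    ext ω
    simp [B, C]
  have hR : Measurable fun ω : ℕ → V => (restrictPath m ω, restrictPath j (pathShift m ω)) :=
    (measurable_restrictPath m).prodMk ((measurable_restrictPath j).comp (measurable_pathShift m))
  rw [hpair, ← sum_measure_preimage_singleton _ fun y _ => hR (measurableSet_singleton y),
    Finset.sum_product, hS.measure_eq_sum (μ a), hF.measure_eq_sum (μ z), Finset.sum_mul_sum]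
  refine Finset.sum_congr rfl fun y hy => Finset.sum_congr rfl fun u hu => ?_
  obtain ⟨v, hv, rfl⟩ := (Set.Finite.mem_toFinset _).1 hy
  obtain ⟨w, -, rfl⟩ := (Set.Finite.mem_toFinset _).1 hu
  have hcyl : (fun ω => (restrictPath m ω, restrictPath j (pathShift m ω))) ⁻¹'
      {(restrictPath m v, restrictPath j w)} =
      pathCylinder v m ∩ pathShift m ⁻¹' pathCylinder w j := by
    rw [← restrictPath_preimage_singleton, ← restrictPath_preimage_singleton]
    ext ω
    simp
  rw [hcyl, hμ.measure_pathCylinder_inter_shift hP0, restrictPath_preimage_singleton,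
    restrictPath_preimage_singleton, hz v hv]

lemma HasMarkovLaw.measure_inter_shift (hμ : HasMarkovLaw P μ) (hP0 : ∀ a b, 0 ≤ P a b)
    {a z : V} [IsFiniteMeasure (μ a)] {m : ℕ} {S F : Set (ℕ → V)}
    (hS : DeterminedUpTo m S) (hz : ∀ ω ∈ S, ω m = z) (hF : MeasurableSet F) :
    μ a (S ∩ pathShift m ⁻¹' F) = μ a S * μ z F := by
  have hmap : ((μ a).restrict S).map (pathShift m) = μ a S • μ z := by
    have hdet : ∀ F ∈ {F : Set (ℕ → V) | ∃ j, DeterminedUpTo j F},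
        ((μ a).restrict S).map (pathShift m) F = (μ a S • μ z) F := by
      rintro F ⟨j, hF⟩
      rw [Measure.map_apply (measurable_pathShift m) hF.measurableSet,
        Measure.restrict_apply (measurable_pathShift m hF.measurableSet), Set.inter_comm,
        hμ.measure_inter_shift_of_determinedUpTo hP0 hS hz hF, Measure.smul_apply, smul_eq_mul]
    exact ext_of_generate_finite _ generateFrom_determinedUpTo.symm isPiSystem_determinedUpTo
      hdet (hdet _ ⟨0, fun _ _ _ h => h⟩)
  have := congrArg (· F) hmap
  simp only [Measure.map_apply (measurable_pathShift m) hF,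
    Measure.restrict_apply (measurable_pathShift m hF), Measure.smul_apply, smul_eq_mul] at this
  rwa [Set.inter_comm] at this

lemma HasMarkovLaw.measure_inter_shift_stopped (hμ : HasMarkovLaw P μ)
    (hP0 : ∀ a b, 0 ≤ P a b) {a z : V} [IsFiniteMeasure (μ a)] {τ : (ℕ → V) → ℕ∞}
    {S F : Set (ℕ → V)} (hSτ : ∀ m : ℕ, DeterminedUpTo m (S ∩ {ω | τ ω = m}))
    (hz : ∀ ω ∈ S, ∀ m : ℕ, τ ω = m → ω m = z) (hτ : μ a {ω | τ ω = ⊤} = 0)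
    (hF : MeasurableSet F) :
    μ a (S ∩ {ω | ∃ m : ℕ, τ ω = m ∧ pathShift m ω ∈ F}) = μ a S * μ z F := by
  have hdisj : Pairwise (Function.onFun Disjoint fun m : ℕ => S ∩ {ω | τ ω = m}) :=
    fun m m' hne => Set.disjoint_left.2 fun ω h h' => hne (by exact_mod_cast h.2.symm.trans h'.2)
  have hsplit : S ∩ {ω | ∃ m : ℕ, τ ω = m ∧ pathShift m ω ∈ F} =
      ⋃ m : ℕ, S ∩ {ω | τ ω = m} ∩ pathShift m ⁻¹' F := by
    ext ω
    simp only [Set.mem_inter_iff, Set.mem_ofPred_eq, Set.mem_iUnion, Set.mem_preimage]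
    tauto
  have hfinite : S \ {ω | τ ω = ⊤} = ⋃ m : ℕ, S ∩ {ω | τ ω = m} := by
    ext ω
    simp only [Set.mem_sdiff, Set.mem_iUnion, Set.mem_inter_iff, Set.mem_ofPred_eq,
      exists_and_left, ← ne_eq, ENat.ne_top_iff_exists, eq_comm]
  calc μ a (S ∩ {ω | ∃ m : ℕ, τ ω = m ∧ pathShift m ω ∈ F})
      = ∑' m : ℕ, μ a (S ∩ {ω | τ ω = m} ∩ pathShift m ⁻¹' F) := by
        rw [hsplit, measure_iUnion (fun m m' hne => (hdisj hne).mono Set.inter_subset_left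
          Set.inter_subset_left) fun m => (hSτ m).measurableSet.inter
          (measurable_pathShift m hF)]
    _ = ∑' m : ℕ, μ a (S ∩ {ω | τ ω = m}) * μ z F := by
        congr 1
        ext m
        exact hμ.measure_inter_shift hP0 (hSτ m) (fun ω h => hz ω h.1 m h.2) hF
    _ = μ a S * μ z F := by
        rw [ENNReal.tsum_mul_right, ← measure_iUnion hdisj fun m => (hSτ m).measurableSet,
          ← hfinite, measure_sdiff_null hτ]

end MarkovProperty

section NatInf

/-- `entryTime` and `iterHit` unfold to `natInf` of a set of times. -/
noncomputable def natInf (T : Set ℕ) : ℕ∞ :=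
  sInf {m : ℕ∞ | ∃ n : ℕ, m = n ∧ n ∈ T}

lemma natInf_le {T : Set ℕ} {n : ℕ} (h : n ∈ T) : natInf T ≤ n :=
  sInf_le ⟨n, rfl, h⟩

lemma le_natInf {T : Set ℕ} {k : ℕ∞} (h : ∀ n ∈ T, k ≤ n) : k ≤ natInf T :=
  le_sInf <| by rintro _ ⟨n, rfl, hn⟩; exact h n hn

lemma natInf_mem {T : Set ℕ} {k : ℕ} (h : natInf T = k) : k ∈ T := by
  have hne : {m : ℕ∞ | ∃ n : ℕ, m = n ∧ n ∈ T}.Nonempty := by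
    refine Set.nonempty_iff_ne_empty.2 fun hempty => ?_
    rw [natInf, hempty, sInf_empty] at h
    exact ENat.top_ne_natCast k h
  obtain ⟨n, hn, hnT⟩ := csInf_mem hne
  rw [← natInf, h, Nat.cast_inj] at hn
  exact hn ▸ hnT

lemma natInf_inf_le {T T' : Set ℕ} {m : ℕ} (h : ∀ k ≤ m, k ∈ T → k ∈ T') :
    natInf T' ⊓ (m + 1) ≤ natInf T ⊓ (m + 1) := by
  refine le_inf (le_natInf fun n hn => ?_) inf_le_right
  by_cases hnm : n ≤ m
  · exact inf_le_of_left_le (natInf_le (h n hnm hn))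
  · exact inf_le_of_right_le (by exact_mod_cast Nat.succ_le_of_lt (not_le.1 hnm))

lemma natInf_eq_add {T T' : Set ℕ} {m : ℕ} (hT : ∀ k ∈ T, m ≤ k)
    (hT' : ∀ k, m + k ∈ T ↔ k ∈ T') : natInf T = m + natInf T' := by
  refine le_antisymm ?_ (le_natInf fun n hn => ?_)
  · cases h : natInf T' using ENat.recTopCoe with
    | top => simp
    | coe k => exact (natInf_le ((hT' k).2 (natInf_mem h))).trans_eq (Nat.cast_add m k)
  · obtain ⟨k, rfl⟩ := Nat.exists_eq_add_of_le (hT n hn)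
    exact (add_le_add le_rfl (natInf_le ((hT' k).1 hn))).trans_eq (Nat.cast_add m k).symm

lemma lt_natCast_iff_inf_lt {a : ℕ∞} {k m : ℕ} (hk : k ≤ m) : a < k ↔ a ⊓ (m + 1) < k := by
  have : ¬((m : ℕ∞) + 1 < k) := by exact_mod_cast Nat.not_lt.2 (Nat.le_succ_of_le hk)
  rw [inf_lt_iff]
  tauto

end NatInf

section StoppingTime

variable {V : Type*}

/-- Stopping times of the natural filtration, encoded as: `τ ⊓ (m + 1)` depends only on
`ω 0, …, ω m`. -/
def IsPathStoppingTime (τ : (ℕ → V) → ℕ∞) : Prop :=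
  ∀ (m : ℕ) (ω ω' : ℕ → V), (∀ k ≤ m, ω k = ω' k) → τ ω ⊓ (m + 1) = τ ω' ⊓ (m + 1)

lemma IsPathStoppingTime.inf {τ σ : (ℕ → V) → ℕ∞} (hτ : IsPathStoppingTime τ)
    (hσ : IsPathStoppingTime σ) : IsPathStoppingTime (τ ⊓ σ) := fun m ω ω' hag => by
  simp only [Pi.inf_apply]
  rw [inf_inf_distrib_right, inf_inf_distrib_right (τ ω'), hτ m ω ω' hag, hσ m ω ω' hag]

lemma IsPathStoppingTime.determinedUpTo_eq {τ : (ℕ → V) → ℕ∞} (hτ : IsPathStoppingTime τ)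
    {k m : ℕ} (hk : k ≤ m) : DeterminedUpTo m {ω | τ ω = k} := by
  intro ω ω' hag (h : τ ω = k)
  have hlt : (k : ℕ∞) < m + 1 := by exact_mod_cast Nat.lt_succ_of_le hk
  have h' : τ ω' ⊓ (m + 1) = k := by rw [← hτ m ω ω' hag, h, inf_of_le_left hlt.le]
  rcases min_eq_iff.1 h' with ⟨h1, -⟩ | ⟨h2, -⟩
  · exact h1
  · exact absurd h2 hlt.ne'

lemma IsPathStoppingTime.measurable [MeasurableSpace V] [MeasurableSingletonClass V] [Finite V]
    {τ : (ℕ → V) → ℕ∞} (hτ : IsPathStoppingTime τ) : Measurable τ := by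
  refine measurable_to_countable' fun t => ?_
  induction t using ENat.recTopCoe with
  | top =>
    have htop : τ ⁻¹' {⊤} = (⋃ k : ℕ, {ω | τ ω = k})ᶜ := by
      ext ω
      simp only [Set.mem_preimage, Set.mem_singleton_iff, Set.mem_compl_iff, Set.mem_iUnion,
        Set.mem_ofPred_eq, not_exists]
      generalize τ ω = t
      cases t using ENat.recTopCoe <;> simp
    rw [htop]
    exact (MeasurableSet.iUnion fun k => (hτ.determinedUpTo_eq le_rfl).measurableSet).compl
  | coe k => exact (hτ.determinedUpTo_eq le_rfl).measurableSet

lemma isPathStoppingTime_natInf {T : (ℕ → V) → Set ℕ}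
    (hT : ∀ (m : ℕ) (ω ω' : ℕ → V), (∀ k ≤ m, ω k = ω' k) → ∀ k ≤ m, k ∈ T ω → k ∈ T ω') :
    IsPathStoppingTime fun ω => natInf (T ω) := fun m ω ω' hag =>
  le_antisymm (natInf_inf_le (hT m ω' ω fun k hk => (hag k hk).symm))
    (natInf_inf_le (hT m ω ω' hag))

lemma isPathStoppingTime_entryTime (A : Finset V) : IsPathStoppingTime (entryTime A) :=
  isPathStoppingTime_natInf fun _ ω ω' hag k hk (h : ω k ∈ A) => show ω' k ∈ A from hag k hk ▸ h

lemma isPathStoppingTime_iterHit (W : Finset V) (n : ℕ) :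
    IsPathStoppingTime fun ω => iterHit W ω n := by
  induction n with
  | zero => exact fun _ _ _ _ => rfl
  | succ n ih =>
    exact isPathStoppingTime_natInf fun m ω ω' hag k hk ⟨hlt, hW⟩ =>
      ⟨(lt_natCast_iff_inf_lt hk).2 (ih m ω ω' hag ▸ (lt_natCast_iff_inf_lt hk).1 hlt),
        hag k hk ▸ hW⟩

lemma iterHit_mono (W : Finset V) (ω : ℕ → V) : Monotone (iterHit W ω) :=
  monotone_nat_of_le_succ fun _ => le_natInf fun _ hk => hk.1.le

lemma entryTime_eq_add_shift {A : Finset V} {ω : ℕ → V} {m : ℕ} (h : (m : ℕ∞) ≤ entryTime A ω) :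
    entryTime A ω = m + entryTime A (pathShift m ω) :=
  natInf_eq_add (fun _ hk => by exact_mod_cast h.trans (natInf_le hk)) fun _ => Iff.rfl

lemma iterHit_succ_eq_add_shift {W : Finset V} {ω : ℕ → V} {n m : ℕ} (h : iterHit W ω n = m) :
    iterHit W ω (n + 1) = m + iterHit W (pathShift m ω) 1 := by
  show natInf _ = m + natInf _
  rw [h]
  refine natInf_eq_add (fun _ hk => by exact_mod_cast hk.1.le) fun k => ?_
  show (m : ℕ∞) < ↑(m + k) ∧ ω (m + k) ∈ W ↔ (0 : ℕ∞) < k ∧ ω (m + k) ∈ W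
  exact and_congr_left' (by norm_cast; omega)

noncomputable def traceStop (W A : Finset V) (n : ℕ) (ω : ℕ → V) : ℕ∞ :=
  iterHit W ω n ⊓ entryTime A ω

lemma isPathStoppingTime_traceStop (W A : Finset V) (n : ℕ) :
    IsPathStoppingTime (traceStop W A n) :=
  (isPathStoppingTime_iterHit W n).inf (isPathStoppingTime_entryTime A)

lemma traceStop_mono (W A : Finset V) (ω : ℕ → V) : Monotone fun n => traceStop W A n ω :=
  fun _ _ h => inf_le_inf_right _ (iterHit_mono W ω h)

def visits (A : Finset V) : Set (ℕ → V) := {ω | ∃ n, ω n ∈ A}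

lemma traceStop_ne_top {W A : Finset V} {ω : ℕ → V} (hω : ω ∈ visits A) (n : ℕ) :
    traceStop W A n ω ≠ ⊤ := by
  obtain ⟨k, hk⟩ := hω
  exact ne_top_of_le_ne_top (ENat.natCast_ne_top k) (inf_le_right.trans (natInf_le hk))

lemma pathShift_mem_visits {W A : Finset V} {ω : ℕ → V} {n m : ℕ} (hω : ω ∈ visits A)
    (h : traceStop W A n ω = m) : pathShift m ω ∈ visits A := by
  obtain ⟨k, hk⟩ := hω
  have hmk : (m : ℕ∞) ≤ k := h ▸ inf_le_right.trans (natInf_le (T := {n | ω n ∈ A}) hk)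
  replace hmk : m ≤ k := by exact_mod_cast hmk
  exact ⟨k - m, by rwa [pathShift, Nat.add_sub_cancel' hmk]⟩

lemma traceStop_succ {W A : Finset V} {ω : ℕ → V} {n m : ℕ} (h : traceStop W A n ω = m) :
    traceStop W A (n + 1) ω = m + traceStop W A 1 (pathShift m ω) := by
  have hent : (m : ℕ∞) ≤ entryTime A ω := h ▸ inf_le_right
  by_cases hhit : iterHit W ω n = m
  · rw [traceStop, traceStop, iterHit_succ_eq_add_shift hhit, entryTime_eq_add_shift hent,
      ← min_add_add_left]
  · have he : entryTime A ω = m := ((min_eq_iff.1 h).resolve_left fun h' => hhit h'.1).1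
    have h0 : entryTime A (pathShift m ω) = 0 :=
      nonpos_iff_eq_zero.1 (natInf_le (show ω (m + 0) ∈ A from natInf_mem he))
    have hle : (m : ℕ∞) ≤ iterHit W ω (n + 1) :=
      (h ▸ inf_le_left : (m : ℕ∞) ≤ iterHit W ω n).trans (iterHit_mono W ω n.le_succ)
    rw [traceStop, traceStop, he, h0, inf_of_le_right hle, inf_of_le_right zero_le, add_zero]

lemma traceProc_eq (W A : Finset V) (ω : ℕ → V) (n : ℕ) :
    traceProc W A ω n = ω (traceStop W A n ω).toNat := rfl

lemma traceProc_zero (W A : Finset V) (ω : ℕ → V) : traceProc W A ω 0 = ω 0 := by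
  simp [traceProc_eq, traceStop, iterHit]

lemma traceProc_succ {W A : Finset V} {ω : ℕ → V} {n m : ℕ}
    (hfin : traceStop W A (n + 1) ω ≠ ⊤) (h : traceStop W A n ω = m) :
    traceProc W A ω (n + 1) = traceProc W A (pathShift m ω) 1 := by
  rw [traceStop_succ h] at hfin
  rw [traceProc_eq, traceProc_eq, traceStop_succ h,
    ENat.toNat_add (ENat.natCast_ne_top m) (WithTop.add_ne_top.1 hfin).2, ENat.toNat_natCast]
  rfl

lemma traceProc_eq_of_agree {W A : Finset V} {ω ω' : ℕ → V} {n m i : ℕ}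
    (h : traceStop W A n ω = m) (hag : ∀ k ≤ m, ω k = ω' k) (hi : i ≤ n) :
    traceProc W A ω' i = traceProc W A ω i := by
  obtain ⟨k, hk, hkm⟩ := ENat.le_natCast_iff.1
    (show traceStop W A i ω ≤ m from (traceStop_mono W A ω hi).trans_eq h)
  have hk' : traceStop W A i ω' = k :=
    (isPathStoppingTime_traceStop W A i).determinedUpTo_eq hkm ω ω' hag hk
  rw [traceProc_eq, traceProc_eq, hk, hk', ENat.toNat_natCast, hag k hkm]

lemma determinedUpTo_traceProc_inter {W A : Finset V} {n : ℕ} (Q : (ℕ → V) → Prop)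
    (hQ : ∀ f g : ℕ → V, (∀ i ≤ n, f i = g i) → Q f → Q g) (m : ℕ) :
    DeterminedUpTo m ({ω | Q (traceProc W A ω)} ∩ {ω | traceStop W A n ω = m}) :=
  fun ω ω' hag ⟨hQω, hτ⟩ =>
    ⟨hQ _ _ (fun _ hi => (traceProc_eq_of_agree hτ hag hi).symm) hQω,
      (isPathStoppingTime_traceStop W A n).determinedUpTo_eq le_rfl ω ω' hag hτ⟩

variable [MeasurableSpace V] [MeasurableSingletonClass V]

lemma measurableSet_visits (A : Finset V) : MeasurableSet (visits A) := by
  simp only [visits, Set.ofPred_exists]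
  exact MeasurableSet.iUnion fun n => measurable_pi_apply n A.measurableSet

lemma ae_mem_visits {A : Finset V} {ν : Measure (ℕ → V)} [IsProbabilityMeasure ν]
    (h : ν (visits A) = 1) : ∀ᵐ ω ∂ν, ω ∈ visits A :=
  mem_ae_iff.2 ((prob_compl_eq_zero_iff (measurableSet_visits A)).2 h)

lemma measurable_traceProc [Finite V] (W A : Finset V) (n : ℕ) :
    Measurable fun ω : ℕ → V => traceProc W A ω n := by
  have hτ : Measurable fun ω => (traceStop W A n ω).toNat :=
    (Measurable.of_discrete (f := ENat.toNat)).comp (isPathStoppingTime_traceStop W A n).measurable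
  exact (measurable_from_prod_countable_left (f := fun p : (ℕ → V) × ℕ => p.1 p.2)
    fun k => measurable_pi_apply k).comp (measurable_id.prodMk hτ)

end StoppingTime

section TraceChain

variable {V : Type*} [Finite V] [DecidableEq V] [MeasurableSpace V] [MeasurableSingletonClass V]
  {P : V → V → ℝ} {μ : V → Measure (ℕ → V)} [∀ a, IsProbabilityMeasure (μ a)]
  {W A : Finset V} {x : V}

lemma HasMarkovLaw.measure_traceProc_inter_shift (hμ : HasMarkovLaw P μ)
    (hP0 : ∀ a b, 0 ≤ P a b) (hx : μ x (visits A) = 1) {n : ℕ} {z : V}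
    {Q : (ℕ → V) → Prop} (hQ : ∀ f g : ℕ → V, (∀ i ≤ n, f i = g i) → Q f → Q g)
    (hQz : ∀ f, Q f → f n = z) {F : Set (ℕ → V)} (hF : MeasurableSet F) :
    μ x ({ω | Q (traceProc W A ω)} ∩ {ω | ∃ m : ℕ, traceStop W A n ω = m ∧ pathShift m ω ∈ F}) =
      μ x {ω | Q (traceProc W A ω)} * μ z F := by
  refine hμ.measure_inter_shift_stopped hP0 (determinedUpTo_traceProc_inter Q hQ)
    (fun ω hω m hm => ?_) (measure_mono_null (fun ω hω hv => traceStop_ne_top hv n hω)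
      (ae_mem_visits hx)) hF
  rw [← hQz _ hω, traceProc_eq, hm, ENat.toNat_natCast]

lemma HasMarkovLaw.measure_traceProc_eq_eq_zero (hμ : HasMarkovLaw P μ)
    (hP0 : ∀ a b, 0 ≤ P a b) (hx : μ x (visits A) = 1) (n : ℕ) {z : V}
    (hz : μ z (visits A) ≠ 1) : μ x {ω | traceProc W A ω n = z} = 0 := by
  have key := hμ.measure_traceProc_inter_shift (W := W) hP0 hx (Q := fun f => f n = z)
    (fun f g hfg hf => hfg n le_rfl ▸ hf) (fun _ hf => hf) (measurableSet_visits A)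
  have hS : μ x {ω | traceProc W A ω n = z} ≤
      μ x {ω | traceProc W A ω n = z} * μ z (visits A) := by
    rw [← key, ← measure_inter_conull (s := {ω | traceProc W A ω n = z}) (ae_mem_visits hx)]
    refine measure_mono fun ω ⟨hω, hv⟩ => ⟨hω, ?_⟩
    obtain ⟨m, hm⟩ := ENat.ne_top_iff_exists.1 (traceStop_ne_top (W := W) hv n)
    exact ⟨m, hm.symm, pathShift_mem_visits hv hm.symm⟩
  by_contra h
  refine hz ((ENNReal.mul_right_inj h (measure_ne_top _ _)).1 ?_).symm
  rw [mul_one]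
  exact le_antisymm hS (mul_le_of_le_one_right' prob_le_one)

lemma HasMarkovLaw.measure_forall_traceProc_visits (hμ : HasMarkovLaw P μ)
    (hP0 : ∀ a b, 0 ≤ P a b) (hx : μ x (visits A) = 1) :
    μ x {ω | ∀ n, μ (traceProc W A ω n) (visits A) = 1} = 1 := by
  refine (measure_congr (ae_eq_univ.2 ?_)).trans measure_univ
  refine measure_mono_null (t := ⋃ (n : ℕ) (z : {z // μ z (visits A) ≠ 1}),
      {ω | traceProc W A ω n = z}) (fun ω hω => ?_)
    (measure_iUnion_null fun n => measure_iUnion_null fun z =>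
      hμ.measure_traceProc_eq_eq_zero hP0 hx n z.2)
  obtain ⟨n, hn⟩ := not_forall.1 hω
  exact Set.mem_iUnion₂.2 ⟨n, ⟨_, hn⟩, rfl⟩

lemma HasMarkovLaw.measure_traceProc_succ (hμ : HasMarkovLaw P μ) (hP0 : ∀ a b, 0 ≤ P a b)
    (hx : μ x (visits A) = 1) (n : ℕ) (y : ℕ → V) :
    μ x {ω | ∀ i ≤ n + 1, traceProc W A ω i = y i} =
      μ x {ω | ∀ i ≤ n, traceProc W A ω i = y i} *
        μ (y n) {ω | traceProc W A ω 1 = y (n + 1)} := by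
  rw [← hμ.measure_traceProc_inter_shift (W := W) hP0 hx (Q := fun f => ∀ i ≤ n, f i = y i)
    (fun f g hfg hf i hi => hfg i hi ▸ hf i hi) (fun _ hf => hf n le_rfl)
    (F := {ω | traceProc W A ω 1 = y (n + 1)})
    (measurable_traceProc W A 1 (measurableSet_singleton _))]
  refine measure_congr (Filter.eventuallyEq_set.2 ?_)
  filter_upwards [ae_mem_visits hx] with ω hv
  obtain ⟨m, hm⟩ := ENat.ne_top_iff_exists.1 (traceStop_ne_top (W := W) hv n)
  simp only [Set.mem_inter_iff, Set.mem_ofPred_eq, ← hm, Nat.cast_inj,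
    exists_eq_left', ← traceProc_succ (traceStop_ne_top hv (n + 1)) hm.symm]
  exact ⟨fun h => ⟨fun i hi => h i (Nat.le_succ_of_le hi), h _ le_rfl⟩,
    fun ⟨h, h'⟩ i hi => (Nat.le_succ_iff.1 hi).elim (h i) fun e => e ▸ h'⟩

lemma HasMarkovLaw.measure_traceProc_eq (hμ : HasMarkovLaw P μ) (hP0 : ∀ a b, 0 ≤ P a b)
    (hx : μ x (visits A) = 1) (n : ℕ) (y : ℕ → V) :
    μ x {ω | ∀ i ≤ n, traceProc W A ω i = y i} =
      ENNReal.ofReal (if x = y 0 then 1 else 0) *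
        ∏ i ∈ Finset.Icc 1 n, μ (y (i - 1)) {ω | traceProc W A ω 1 = y i} := by
  induction n with
  | zero =>
    have h0 : {ω | ∀ i ≤ 0, traceProc W A ω i = y i} = {ω | ∀ i ≤ 0, ω i = y i} := by
      ext ω
      simp [traceProc_zero]
    rw [h0, hμ x 0 y]
    simp
  | succ n ih =>
    rw [hμ.measure_traceProc_succ hP0 hx, ih, Finset.prod_Icc_succ_top (by omega),
      Nat.add_sub_cancel, mul_assoc]

end TraceChain

theorem trace_process_is_markov_chain_general
    {V : Type*} [Fintype V] [DecidableEq V]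
    [MeasurableSpace V] [MeasurableSingletonClass V]
    (P : V → V → ℝ) (μ : V → Measure (ℕ → V))
    (hP0 : ∀ a b : V, 0 ≤ P a b)
    (hprob : ∀ a : V, IsProbabilityMeasure (μ a))
    (hlaw : ∀ (a : V) (n : ℕ) (y : ℕ → V),
      μ a {ω | ∀ i ≤ n, ω i = y i} =
        ENNReal.ofReal ((if a = y 0 then (1 : ℝ) else 0) *
          ∏ i ∈ Finset.Icc 1 n, P (y (i - 1)) (y i)))
    (A : Finset V) (W : Finset V) (x : V)
    (hx : μ x {ω | ∃ n : ℕ, ω n ∈ A} = 1) :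
    μ x {ω | ∀ n : ℕ, μ (traceProc W A ω n) {ω' | ∃ k : ℕ, ω' k ∈ A} = 1} = 1 ∧
      ∀ (n : ℕ) (y : ℕ → V), (∀ i ≤ n, μ (y i) {ω | ∃ k : ℕ, ω k ∈ A} = 1) →
        (μ x {ω | ∀ i ≤ n, traceProc W A ω i = y i}).toReal =
          (if x = y 0 then (1 : ℝ) else 0) *
            ∏ i ∈ Finset.Icc 1 n,
              (μ (y (i - 1)) {ω | traceProc W A ω 1 = y i}).toReal := by
  have hμ : HasMarkovLaw P μ := hlaw
  refine ⟨hμ.measure_forall_traceProc_visits hP0 hx, fun n y _ => ?_⟩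
  rw [hμ.measure_traceProc_eq hP0 hx, ENNReal.toReal_mul, ENNReal.toReal_prod,
    ENNReal.toReal_ofReal (by split_ifs <;> norm_num)]

theorem trace_process_is_markov_chain
    {V : Type*} [Fintype V] [DecidableEq V] [Nonempty V]
    [MeasurableSpace V] [MeasurableSingletonClass V]
    (P : V → V → ℝ) (μ : V → Measure (ℕ → V))
    (hP0 : ∀ a b : V, 0 ≤ P a b) (hP1 : ∀ a : V, ∑ b : V, P a b = 1)
    (hprob : ∀ a : V, IsProbabilityMeasure (μ a))
    (hlaw : ∀ (a : V) (n : ℕ) (y : ℕ → V),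
      μ a {ω | ∀ i ≤ n, ω i = y i} =
        ENNReal.ofReal ((if a = y 0 then (1 : ℝ) else 0) *
          ∏ i ∈ Finset.Icc 1 n, P (y (i - 1)) (y i)))
    (A : Finset V) (W : Finset V) (x : V)
    (hx : μ x {ω | ∃ n : ℕ, ω n ∈ A} = 1) :
    μ x {ω | ∀ n : ℕ, μ (traceProc W A ω n) {ω' | ∃ k : ℕ, ω' k ∈ A} = 1} = 1 ∧
      ∀ (n : ℕ) (y : ℕ → V), (∀ i ≤ n, μ (y i) {ω | ∃ k : ℕ, ω k ∈ A} = 1) →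
        (μ x {ω | ∀ i ≤ n, traceProc W A ω i = y i}).toReal =
          (if x = y 0 then (1 : ℝ) else 0) *
            ∏ i ∈ Finset.Icc 1 n,
              (μ (y (i - 1)) {ω | traceProc W A ω 1 = y i}).toReal :=
  trace_process_is_markov_chain_general P μ hP0 hprob hlaw A W x hx

end LERW
end

section
/- Let V be a finite set, ∅ ≠ V_1 ⊊ V, and m = #(V ∖ V_1) + 1. Let v = (v_0, …, v_k) be a self-avoiding finite path with all entries in V ∖ V_1, and let V_1 = W_1 ⊊ W_2 ⊊ ⋯ ⊊ W_m = V be subsets such that #(W_{j+1} ∖ W_j) = 1 for every 1 ≤ j ≤ m−1 and W_{j+2} ∖ W_{j+1} = {v_j} for every 0 ≤ j ≤ k (indices so that W_2 = W_1 ∪ {v_0}, …, W_{k+2} = W_{k+1} ∪ {v_k}). Then for every finite path w on V satisfying 𝔏_{V_1}(w) = w and (𝔏(w))^{[V ∖ V_1]} = v, one has 𝔏(w) = 𝔏_{W_m} ∘ ⋯ ∘ 𝔏_{W_3} ∘ 𝔏_{W_2}(w). -/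
/-! The iterates `𝔏_{W_{j+1}} ∘ ⋯ ∘ 𝔏_{W_2}(w)` all have the same loop erasure as `w`,
and the `j`-th one visits each vertex of `W_{j+1}` at most once; for `j = m - 1` this makes it
self-avoiding, hence equal to its own loop erasure. Passing from `W_{j+1}` to
`W_{j+2} = W_{j+1} ∪ {x}` preserves `𝔏` because `𝔏(w)` stays in `W_{j+1}` until it reaches
`x`: its entries outside `V₁` before `x` are among `v_0, …, v_{j-1}`, which the refinement
adds before `x`. -/

open MeasureTheory

theorem monotoneOn_Icc_of_le_succ {α : Type*} [Preorder α] {f : ℕ → α} {a b : ℕ}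
    (h : ∀ n, a ≤ n → n < b → f n ≤ f (n + 1)) : MonotoneOn f (Set.Icc a b) := by
  intro i hi j hj hij
  induction j, hij using Nat.le_induction with
  | base => exact le_rfl
  | succ j hij ih =>
    exact (ih ⟨hi.1.trans hij, by grind⟩).trans (h j (hi.1.trans hij) (by grind))

theorem List.exists_lt_of_mem_takeWhile_of_filter_eq {α : Type*} [DecidableEq α]
    {L : List α} {p : α → Bool} {v : ℕ → α} {n j : ℕ} {x z : α}
    (hL : L.filter p = (List.range n).map v)
    (hz : z ∈ L.takeWhile (· ≠ x)) (hpz : p z) (hx : j < n → v j = x) :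
    ∃ i < j, i < n ∧ v i = z := by
  have hpre : (L.takeWhile (· ≠ x)).filter p <+: (List.range n).map v :=
    hL ▸ (List.takeWhile_prefix _).filter p
  rw [List.prefix_iff_eq_take, ← List.map_take, List.take_range] at hpre
  obtain ⟨i, hi, rfl⟩ := List.mem_map.1 (hpre ▸ List.mem_filter.2 ⟨hz, hpz⟩)
  rw [List.mem_range, lt_min_iff] at hi
  refine ⟨i, ?_, hi.2, rfl⟩
  by_contra hji
  have hvj : v j ∈ (L.takeWhile (· ≠ x)).filter p :=
    hpre ▸ List.mem_map_of_mem (List.mem_range.2 (lt_min (by omega) (by omega)))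
  simpa [hx (by omega)] using List.mem_takeWhile_imp (List.mem_filter.1 hvj).1

namespace LERW

variable {V : Type*} [DecidableEq V]

lemma dropToLastOcc_sublist (a : V) (l : List V) : (dropToLastOcc a l).Sublist l := by
  simpa [dropToLastOcc] using (List.takeWhile_sublist (l := l.reverse) (fun z => z ≠ a)).reverse

lemma self_notMem_dropToLastOcc (a : V) (l : List V) : a ∉ dropToLastOcc a l := by
  intro h
  simpa using List.mem_takeWhile_imp (List.mem_reverse.1 h)

lemma dropToLastOcc_of_notMem {a : V} {l : List V} (h : a ∉ l) : dropToLastOcc a l = l := by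
  rw [dropToLastOcc, List.takeWhile_eq_self_iff.2, List.reverse_reverse]
  intro z hz
  simpa using fun hza : z = a => h (hza ▸ List.mem_reverse.1 hz)

lemma dropToLastOcc_eq_nil_of_getLast {a : V} {l : List V}
    (h : a = (a :: l).getLast (List.cons_ne_nil a l)) : dropToLastOcc a l = [] := by
  rcases List.eq_nil_or_concat l with rfl | ⟨l', b, rfl⟩
  · rfl
  · simp_all [dropToLastOcc]

lemma PLE_cons_of_mem {S : Finset V} {a : V} (ha : a ∈ S) (rest : List V) :
    PLE S (a :: rest) = a :: PLE S (dropToLastOcc a rest) := by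
  rw [PLE, if_pos ha]
  split_ifs with hlast
  · rw [dropToLastOcc_eq_nil_of_getLast hlast, PLE]
  · rfl

lemma PLE_cons_of_notMem {S : Finset V} {a : V} (ha : a ∉ S) (rest : List V) :
    PLE S (a :: rest) = a :: PLE S rest := by
  rw [PLE, if_neg ha]
  split_ifs with hrest
  · rw [hrest, PLE]
  · rfl

lemma PLE_cons_of_notMem_tail (S : Finset V) {a : V} {rest : List V} (h : a ∉ rest) :
    PLE S (a :: rest) = a :: PLE S rest := by
  by_cases ha : a ∈ S
  · rw [PLE_cons_of_mem ha, dropToLastOcc_of_notMem h]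
  · exact PLE_cons_of_notMem ha rest

lemma PLE_sublist (S : Finset V) (l : List V) : (PLE S l).Sublist l := by
  induction l using PLE.induct S with
  | case1 => rw [PLE]
  | case2 a rest ha hlast =>
    rw [PLE_cons_of_mem ha, dropToLastOcc_eq_nil_of_getLast hlast, PLE]
    simp
  | case3 a rest ha _ ih =>
    rw [PLE_cons_of_mem ha]
    exact (ih.trans (dropToLastOcc_sublist a rest)).cons_cons a
  | case4 a ha => rw [PLE_cons_of_notMem ha, PLE]
  | case5 a rest ha _ ih => rw [PLE_cons_of_notMem ha]; exact ih.cons_cons a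

def SelfAvoidingOn (S : Finset V) (l : List V) : Prop :=
  ∀ s ∈ S, l.count s ≤ 1

namespace SelfAvoidingOn

variable {S : Finset V} {a : V} {l l' : List V}

lemma nil : SelfAvoidingOn S [] := by simp [SelfAvoidingOn]

lemma sublist (h : SelfAvoidingOn S l) (hl : l'.Sublist l) : SelfAvoidingOn S l' :=
  fun s hs => (hl.count_le s).trans (h s hs)

lemma cons (ha : a ∈ S → a ∉ l) (h : SelfAvoidingOn S l) : SelfAvoidingOn S (a :: l) := by
  intro s hs
  rw [List.count_cons]
  by_cases hsa : a = s
  · subst hsa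
    simp [List.count_eq_zero.2 (ha hs)]
  · simpa [hsa] using h s hs

lemma notMem_of_cons (h : SelfAvoidingOn S (a :: l)) (ha : a ∈ S) : a ∉ l := by
  have := h a ha
  rw [List.count_cons_self] at this
  exact List.count_eq_zero.1 (by omega)

lemma insert (h : SelfAvoidingOn S l) (ha : a ∉ l) : SelfAvoidingOn (insert a S) l := by
  intro s hs
  rcases Finset.mem_insert.1 hs with rfl | hs
  · simp [List.count_eq_zero.2 ha]
  · exact h s hs

end SelfAvoidingOn

lemma selfAvoidingOn_PLE (S : Finset V) (l : List V) : SelfAvoidingOn S (PLE S l) := by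
  induction l using PLE.induct S with
  | case1 => rw [PLE]; exact .nil
  | case2 a rest ha hlast =>
    rw [PLE_cons_of_mem ha, dropToLastOcc_eq_nil_of_getLast hlast, PLE]
    exact SelfAvoidingOn.nil.cons fun _ => List.not_mem_nil
  | case3 a rest ha _ ih =>
    rw [PLE_cons_of_mem ha]
    exact ih.cons fun _ hmem =>
      self_notMem_dropToLastOcc a rest ((PLE_sublist S _).subset hmem)
  | case4 a ha =>
    rw [PLE_cons_of_notMem ha, PLE]
    exact SelfAvoidingOn.nil.cons fun _ => List.not_mem_nil
  | case5 a rest ha _ ih => rw [PLE_cons_of_notMem ha]; exact ih.cons fun h => absurd h ha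

lemma PLE_eq_self_iff {S : Finset V} {l : List V} : PLE S l = l ↔ SelfAvoidingOn S l := by
  refine ⟨fun h => h ▸ selfAvoidingOn_PLE S l, fun h => ?_⟩
  induction l with
  | nil => rw [PLE]
  | cons a rest ih =>
    have hrest := ih (h.sublist (List.sublist_cons_self a rest))
    by_cases ha : a ∈ S
    · rw [PLE_cons_of_notMem_tail S (h.notMem_of_cons ha), hrest]
    · rw [PLE_cons_of_notMem ha, hrest]

lemma selfAvoidingOn_iterPLE {U : ℕ → Finset V} {w : List V} (h0 : SelfAvoidingOn (U 0) w) :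
    ∀ n, SelfAvoidingOn (U n) (iterPLE U n w)
  | 0 => h0
  | n + 1 => selfAvoidingOn_PLE (U (n + 1)) _

variable [Fintype V]

lemma LE_cons (a : V) (rest : List V) : LE (a :: rest) = a :: LE (dropToLastOcc a rest) :=
  PLE_cons_of_mem (Finset.mem_univ a) rest

lemma LE_cons_of_notMem {a : V} {rest : List V} (h : a ∉ rest) : LE (a :: rest) = a :: LE rest :=
  PLE_cons_of_notMem_tail _ h

/-- `u` runs through `S` without loops up to its first visit of `x`, and the `PLE` jump from there
to the last visit of `x` is also the first jump of `LE`. -/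
lemma LE_PLE_insert {S : Finset V} {x : V} (hx : x ∉ S) {u : List V}
    (hu : SelfAvoidingOn S u) (hpre : ∀ z ∈ (LE u).takeWhile (· ≠ x), z ∈ S) :
    LE (PLE (insert x S) u) = LE u := by
  induction u with
  | nil => rw [PLE]
  | cons a rest ih =>
    by_cases haS : a ∈ S
    · have hrest := hu.notMem_of_cons haS
      have hax : a ≠ x := fun h => hx (h ▸ haS)
      rw [LE_cons_of_notMem hrest] at hpre ⊢
      rw [PLE_cons_of_notMem_tail _ hrest,
        LE_cons_of_notMem fun h => hrest ((PLE_sublist _ rest).subset h)]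
      refine congrArg (a :: ·) (ih (hu.sublist (List.sublist_cons_self a rest)) fun z hz => ?_)
      exact hpre z (by rw [List.takeWhile_cons_of_pos (by simpa using hax)]; exact .tail a hz)
    · obtain rfl : a = x := by
        by_contra hax
        exact haS (hpre a (by simp [LE_cons, hax]))
      have htail : SelfAvoidingOn (insert a S) (dropToLastOcc a rest) :=
        (hu.sublist ((dropToLastOcc_sublist a rest).trans (List.sublist_cons_self a rest))).insert
          (self_notMem_dropToLastOcc a rest)
      rw [PLE_cons_of_mem (Finset.mem_insert_self a S), PLE_eq_self_iff.2 htail,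
        LE_cons_of_notMem (self_notMem_dropToLastOcc a rest), LE_cons]

lemma LE_iterPLE {U : ℕ → Finset V} {w : List V} {n : ℕ} (h0 : SelfAvoidingOn (U 0) w)
    (hstep : ∀ j < n, ∃ x ∉ U j, insert x (U j) = U (j + 1) ∧
      ∀ z ∈ (LE w).takeWhile (· ≠ x), z ∈ U j) :
    LE (iterPLE U n w) = LE w := by
  induction n with
  | zero => rfl
  | succ n ih =>
    have ih := ih fun j hj => hstep j (by omega)
    obtain ⟨x, hx, hU, hpre⟩ := hstep n (by omega)
    change LE (PLE (U (n + 1)) (iterPLE U n w)) = LE w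
    rw [← hU, LE_PLE_insert hx (selfAvoidingOn_iterPLE h0 n) (ih ▸ hpre), ih]

lemma LE_eq_iterPLE {U : ℕ → Finset V} {w : List V} {n : ℕ} (h0 : SelfAvoidingOn (U 0) w)
    (hn : U n = Finset.univ)
    (hstep : ∀ j < n, ∃ x ∉ U j, insert x (U j) = U (j + 1) ∧
      ∀ z ∈ (LE w).takeWhile (· ≠ x), z ∈ U j) :
    LE w = iterPLE U n w := by
  have hfin : SelfAvoidingOn Finset.univ (iterPLE U n w) := hn ▸ selfAvoidingOn_iterPLE h0 n
  rw [← LE_iterPLE h0 hstep]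
  exact PLE_eq_self_iff.2 hfin

theorem LE_eq_iterPLE_on_adapted_refinement_general
    {V : Type*} [Fintype V] [DecidableEq V]
    (V₁ : Finset V)
    (k : ℕ) (v : ℕ → V)
    (W : ℕ → Finset V)
    (hW1 : W 1 = V₁)
    (hWm : W ((Finset.univ \ V₁).card + 1) = Finset.univ)
    (hWstep : ∀ j : ℕ, 1 ≤ j → j ≤ (Finset.univ \ V₁).card →
      W j ⊆ W (j + 1) ∧ (W (j + 1) \ W j).card = 1)
    (hWv : ∀ j ≤ k, W (j + 2) \ W (j + 1) = {v j})
    (w : List V) (hwfix : PLE V₁ w = w)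
    (hwproj : (LE w).filter (fun z => z ∉ V₁) = (List.range (k + 1)).map v) :
    LE w = iterPLE (fun n => W (n + 1)) (Finset.univ \ V₁).card w := by
  set M := (Finset.univ \ V₁).card
  have hmono : MonotoneOn W (Set.Icc 1 (M + 1)) :=
    monotoneOn_Icc_of_le_succ fun j h1 hj => (hWstep j h1 (by omega)).1
  refine LE_eq_iterPLE (hW1 ▸ PLE_eq_self_iff.1 hwfix) hWm fun j hj => ?_
  obtain ⟨x, hx, hins⟩ := Finset.covBy_iff_exists_insert.1
    (Finset.covBy_iff_card_sdiff_eq_one.2 (hWstep (j + 1) (by omega) hj))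
  refine ⟨x, hx, hins, fun z hz => ?_⟩
  by_cases hzV : z ∈ V₁
  · exact hmono ⟨le_rfl, by omega⟩ ⟨by omega, by omega⟩ (by omega) (hW1 ▸ hzV)
  obtain ⟨i, hij, hik, rfl⟩ := List.exists_lt_of_mem_takeWhile_of_filter_eq hwproj hz
    (by simpa using hzV) fun hjk => Finset.singleton_injective <| by
      rw [← hWv j (by omega), ← hins, Finset.insert_sdiff_cancel hx]
  have hvi : v i ∈ W (i + 2) :=
    (Finset.mem_sdiff.1 (hWv i (by omega) ▸ Finset.mem_singleton_self _)).1
  exact hmono ⟨by omega, by omega⟩ ⟨by omega, by omega⟩ (by omega) hvi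

theorem LE_eq_iterPLE_on_adapted_refinement
    {V : Type*} [Fintype V] [DecidableEq V]
    (V₁ : Finset V) (hV₁ : V₁.Nonempty) (hV₁ne : V₁ ≠ Finset.univ)
    (k : ℕ) (v : ℕ → V)
    (hvinj : ∀ i ≤ k, ∀ j ≤ k, v i = v j → i = j)
    (hvout : ∀ j ≤ k, v j ∉ V₁)
    (W : ℕ → Finset V)
    (hW1 : W 1 = V₁)
    (hWm : W ((Finset.univ \ V₁).card + 1) = Finset.univ)
    (hWstep : ∀ j : ℕ, 1 ≤ j → j ≤ (Finset.univ \ V₁).card →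
      W j ⊆ W (j + 1) ∧ (W (j + 1) \ W j).card = 1)
    (hWv : ∀ j ≤ k, W (j + 2) \ W (j + 1) = {v j})
    (w : List V) (hwfix : PLE V₁ w = w)
    (hwproj : (LE w).filter (fun z => z ∉ V₁) = (List.range (k + 1)).map v) :
    LE w = iterPLE (fun n => W (n + 1)) (Finset.univ \ V₁).card w :=
  LE_eq_iterPLE_on_adapted_refinement_general V₁ k v W hW1 hWm hWstep hWv w hwfix hwproj

end LERW
end
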